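/- arXiv:1006.0446 — 3 statements merged into one kernel-verified Lean document; each statement's English description precedes it below -/
import Mathlib

section
/- Suppose a group Γ acts harmonically on a graph G of genus g ≥ 2 and the quotient G/Γ has genus at least 1. Then |Γ| ≤ 2(g − 1); more precisely, if the quotient map is unramified (R = 0) then g(G/Γ) ≥ 2 and |Γ| = (g − 1)/(g(G/Γ) − 1) ≤ g − 1, while if R ≠ 0 then |Γ| ≤ 2g − 2. Consequently, if |Γ| > 2(g − 1) then g(G/Γ) = 0. -/
open scoped Classical

/-- A finite connected multigraph without loop edges. -/
structure Multigraph where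
  V : Type
  E : Type
  [fintypeV : Fintype V]
  [fintypeE : Fintype E]
  ends : E → Sym2 V
  loopless : ∀ e : E, ¬ (ends e).IsDiag
  connected : (SimpleGraph.fromRel fun x y : V => ∃ e : E, ends e = s(x, y)).Connected

attribute [instance] Multigraph.fintypeV Multigraph.fintypeE

namespace Multigraph

/-- The genus (first Betti number, cyclomatic number) of a multigraph. -/
def genus (G : Multigraph) : ℤ :=
  (Fintype.card G.E : ℤ) - (Fintype.card G.V : ℤ) + 1

/-- A cycle in a multigraph, given as a nonempty set of edges such that every vertex is
incident to either 0 or 2 of its edges. -/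
def IsCycleSet (G : Multigraph) (C : Set G.E) : Prop :=
  C.Nonempty ∧ ∀ x : G.V,
    Nat.card {e : G.E // e ∈ C ∧ x ∈ G.ends e} = 0 ∨
    Nat.card {e : G.E // e ∈ C ∧ x ∈ G.ends e} = 2

end Multigraph

/-- A morphism of multigraphs: vertices go to vertices, and each edge goes either to an
edge joining the images of its endpoints, or to the common image of its endpoints
(in which case the edge is *vertical*). -/
structure Morphism (G G' : Multigraph) where
  vmap : G.V → G'.V
  emap : G.E → G'.E ⊕ G'.V
  compat : ∀ e : G.E,
    (∀ e', emap e = Sum.inl e' → G'.ends e' = (G.ends e).map vmap) ∧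
    (∀ v, emap e = Sum.inr v → (G.ends e).map vmap = Sym2.diag v)

namespace Morphism

/-- A morphism is harmonic if for every vertex `x`, the number of edges incident to `x`
mapping to a given edge `e'` incident to `φ(x)` is independent of the choice of `e'`. -/
def Harmonic {G G' : Multigraph} (φ : Morphism G G') : Prop :=
  ∀ (x : G.V) (e₁ e₂ : G'.E), φ.vmap x ∈ G'.ends e₁ → φ.vmap x ∈ G'.ends e₂ →
    Nat.card {e : G.E // x ∈ G.ends e ∧ φ.emap e = Sum.inl e₁} =
    Nat.card {e : G.E // x ∈ G.ends e ∧ φ.emap e = Sum.inl e₂}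

/-- A morphism is nonconstant if its image is not a single vertex. -/
def Nonconstant {G G' : Multigraph} (φ : Morphism G G') : Prop :=
  ∃ x y : G.V, φ.vmap x ≠ φ.vmap y

/-- Composition of morphisms of multigraphs. -/
def comp {G₁ G₂ G₃ : Multigraph} (ψ : Morphism G₂ G₃) (φ : Morphism G₁ G₂) :
    Morphism G₁ G₃ where
  vmap := ψ.vmap ∘ φ.vmap
  emap e := Sum.elim ψ.emap (fun v => Sum.inr (ψ.vmap v)) (φ.emap e)
  compat e := by
    constructor
    · intro e'' h
      rcases hφ : φ.emap e with e' | v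
      · simp only [hφ, Sum.elim_inl] at h
        have h1 := (φ.compat e).1 e' hφ
        have h2 := (ψ.compat e').1 e'' h
        rw [h2, h1, Sym2.map_map]
      · simp only [hφ, Sum.elim_inr] at h
        simp at h
    · intro v h
      rcases hφ : φ.emap e with e' | v₀
      · simp only [hφ, Sum.elim_inl] at h
        have h1 := (φ.compat e).1 e' hφ
        have h2 := (ψ.compat e').2 v h
        rw [← Sym2.map_map, ← h1]
        exact h2
      · simp only [hφ, Sum.elim_inr, Sum.inr.injEq] at h
        have h1 := (φ.compat e).2 v₀ hφ
        subst h
        rw [← Sym2.map_map, h1]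
        rfl
end Morphism

/-- A group of automorphisms of a multigraph `G` (a faithful action of `Γ` on `G` by
automorphisms, i.e. a subgroup of `Aut(G)`). -/
structure GraphAction (Γ : Type) [Group Γ] (G : Multigraph) where
  actV : Γ →* Equiv.Perm G.V
  actE : Γ →* Equiv.Perm G.E
  ends_map : ∀ (γ : Γ) (e : G.E), G.ends (actE γ e) = (G.ends e).map (actV γ)
  faithful : ∀ γ : Γ, (∀ x : G.V, actV γ x = x) → (∀ e : G.E, actE γ e = e) → γ = 1

namespace GraphAction

variable {Γ : Type} [Group Γ] {G : Multigraph}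

/-- Two vertices lie in the same `Δ`-orbit. -/
def vrel (A : GraphAction Γ G) (Δ : Subgroup Γ) (x y : G.V) : Prop :=
  ∃ δ ∈ Δ, A.actV δ x = y

/-- Two edges lie in the same `Δ`-orbit. -/
def erel (A : GraphAction Γ G) (Δ : Subgroup Γ) (e f : G.E) : Prop :=
  ∃ δ ∈ Δ, A.actE δ e = f

/-- The setoid of `Δ`-orbits of vertices. -/
def vSetoid (A : GraphAction Γ G) (Δ : Subgroup Γ) : Setoid G.V where
  r := A.vrel Δ
  iseqv := by
    constructor
    · intro x; exact ⟨1, Δ.one_mem, by simp⟩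
    · rintro x y ⟨δ, hδ, h⟩
      refine ⟨δ⁻¹, Δ.inv_mem hδ, ?_⟩
      rw [map_inv, ← h]
      exact Equiv.symm_apply_apply _ _
    · rintro x y z ⟨δ₁, h1, e1⟩ ⟨δ₂, h2, e2⟩
      refine ⟨δ₂ * δ₁, Δ.mul_mem h2 h1, ?_⟩
      rw [map_mul]
      simp [Equiv.Perm.mul_apply, e1, e2]

/-- The setoid of `Δ`-orbits of edges. -/
def eSetoid (A : GraphAction Γ G) (Δ : Subgroup Γ) : Setoid G.E where
  r := A.erel Δ
  iseqv := by
    constructor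
    · intro e; exact ⟨1, Δ.one_mem, by simp⟩
    · rintro e f ⟨δ, hδ, h⟩
      refine ⟨δ⁻¹, Δ.inv_mem hδ, ?_⟩
      rw [map_inv, ← h]
      exact Equiv.symm_apply_apply _ _
    · rintro e f k ⟨δ₁, h1, e1⟩ ⟨δ₂, h2, e2⟩
      refine ⟨δ₂ * δ₁, Δ.mul_mem h2 h1, ?_⟩
      rw [map_mul]
      simp [Equiv.Perm.mul_apply, e1, e2]

/-- An edge is `Δ`-vertical if its two endpoints lie in the same `Δ`-orbit (so it is
contracted by the quotient morphism `G → G/Δ`). -/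
def Vertical (A : GraphAction Γ G) (Δ : Subgroup Γ) (e : G.E) : Prop :=
  ∃ x y : G.V, G.ends e = s(x, y) ∧ A.vrel Δ x y

/-- The vertex set of the quotient graph `G/Δ`: the `Δ`-orbits of vertices. -/
abbrev quotV (A : GraphAction Γ G) (Δ : Subgroup Γ) : Type :=
  Quotient (A.vSetoid Δ)

/-- The edge set of the quotient graph `G/Δ`: the `Δ`-orbits of non-vertical edges. -/
abbrev quotE (A : GraphAction Γ G) (Δ : Subgroup Γ) : Type :=
  Quotient ((A.eSetoid Δ).comap (Subtype.val : {e : G.E // ¬ A.Vertical Δ e} → G.E))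

/-- The genus of the quotient graph `G/Δ`. -/
noncomputable def quotGenus (A : GraphAction Γ G) (Δ : Subgroup Γ) : ℤ :=
  (Nat.card (A.quotE Δ) : ℤ) - (Nat.card (A.quotV Δ) : ℤ) + 1

/-- The order of the stabilizer `Δ_x` of a vertex `x`. -/
noncomputable def stabOrder (A : GraphAction Γ G) (Δ : Subgroup Γ) (x : G.V) : ℕ :=
  Nat.card {γ : Γ // γ ∈ Δ ∧ A.actV γ x = x}

/-- The vertical multiplicity of a vertex `x`: the number of `Δ`-vertical edges
incident to `x`. -/
noncomputable def vertMult (A : GraphAction Γ G) (Δ : Subgroup Γ) (x : G.V) : ℕ :=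
  Nat.card {e : G.E // x ∈ G.ends e ∧ A.Vertical Δ e}

/-- `r_y = |Δ_x|` for a vertex `y` of the quotient `G/Δ` and any `x` in the fiber over `y`. -/
noncomputable def r (A : GraphAction Γ G) (Δ : Subgroup Γ) (y : A.quotV Δ) : ℕ :=
  A.stabOrder Δ (Quotient.out y)

/-- `w_y = v(x)/|Δ_x|` for a vertex `y` of the quotient `G/Δ` and any `x` in the fiber. -/
noncomputable def w (A : GraphAction Γ G) (Δ : Subgroup Γ) (y : A.quotV Δ) : ℕ :=
  A.vertMult Δ (Quotient.out y) / A.r Δ y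

/-- The ramification number `R = Σ_y [2(1 - 1/r_y) + w_y]` of the quotient map `G → G/Δ`. -/
noncomputable def ram (A : GraphAction Γ G) (Δ : Subgroup Γ) : ℚ :=
  ∑ᶠ y : A.quotV Δ, (2 * (1 - 1 / (A.r Δ y : ℚ)) + (A.w Δ y : ℚ))

/-- A vertex `y` of the quotient `G/Δ` is a branch point if `2(1 - 1/r_y) + w_y > 0`. -/
def IsBranch (A : GraphAction Γ G) (Δ : Subgroup Γ) (y : A.quotV Δ) : Prop :=
  0 < 2 * (1 - 1 / (A.r Δ y : ℚ)) + (A.w Δ y : ℚ)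

/-- The quotient morphism `φ_Δ : G → G/Δ` is harmonic: for every vertex `x` of `G` and
every pair of quotient edges incident to the image of `x`, the numbers of preimages
incident to `x` agree. -/
def QuotHarmonic (A : GraphAction Γ G) (Δ : Subgroup Γ) : Prop :=
  ∀ (x : G.V) (e₁ e₂ : G.E), ¬ A.Vertical Δ e₁ → ¬ A.Vertical Δ e₂ →
    (∃ v ∈ G.ends e₁, A.vrel Δ x v) → (∃ v ∈ G.ends e₂, A.vrel Δ x v) →
    Nat.card {e : G.E // x ∈ G.ends e ∧ A.erel Δ e e₁} =
    Nat.card {e : G.E // x ∈ G.ends e ∧ A.erel Δ e e₂}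

/-- The quotient morphism `φ_Δ : G → G/Δ` is non-degenerate: no neighborhood `x(1)` is
contracted to a vertex, i.e. every vertex has a neighbor outside its `Δ`-orbit. -/
def QuotNondeg (A : GraphAction Γ G) (Δ : Subgroup Γ) : Prop :=
  ∀ x : G.V, ∃ e : G.E, x ∈ G.ends e ∧ ∃ y ∈ G.ends e, ¬ A.vrel Δ x y

/-- `Γ` acts harmonically on `G` if for every subgroup `Δ ≤ Γ` the quotient morphism
`φ_Δ : G → G/Δ` is harmonic and non-degenerate. -/
def ActsHarmonically (A : GraphAction Γ G) : Prop :=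
  ∀ Δ : Subgroup Γ, A.QuotHarmonic Δ ∧ A.QuotNondeg Δ

/-- The quotient map `G → G/Δ` is horizontally unramified: all vertex stabilizers in `Δ`
are trivial. -/
def HorizUnramified (A : GraphAction Γ G) (Δ : Subgroup Γ) : Prop :=
  ∀ (x : G.V) (γ : Γ), γ ∈ Δ → A.actV γ x = x → γ = 1

end GraphAction

/-- `M g` is the maximal order of a group acting harmonically on a graph of genus `g`. -/
noncomputable def M (g : ℕ) : ℕ :=
  sSup {n : ℕ | ∃ (Γ : Type) (i : Group Γ) (G : Multigraph) (A : @GraphAction Γ i G),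
    @GraphAction.ActsHarmonically Γ i G A ∧ G.genus = (g : ℤ) ∧ Nat.card Γ = n}

/-!
A group element fixing a vertex and an incident edge is trivial: harmonicity of `G → G/⟨γ⟩`
forces it to fix every edge at that vertex, and connectivity spreads this to all of `G`. Hence
`Γ` acts freely on the non-vertical edges, and each vertex stabilizer acts freely on the vertical
edges at its vertex. Counting edges and vertices fibrewise gives the Riemann–Hurwitz formula
`2(g - 1) = |Γ| (2(g(G/Γ) - 1) + R)`. The quotient graph is connected, so `g(G/Γ) ≥ 0`, and
every term of `R` is `0` or at least `1`, so `R = 0` or `R ≥ 1`; the bounds follow.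
-/

theorem Setoid.card_eq_card_quotient_mul_card_of_injective {X H : Type*} [Finite X]
    (s : Setoid X) (act : H → X → X) (hclass : ∀ x y, s x y ↔ ∃ h, act h x = y)
    (hinj : ∀ x, Function.Injective (act · x)) :
    Nat.card X = Nat.card (Quotient s) * Nat.card H := by
  have := Fintype.ofFinite (Quotient s)
  have hfiber (c : Quotient s) : Nat.card {x // Quotient.mk s x = c} = Nat.card H := by
    have hmem (x : X) : Quotient.mk s x = c ↔ ∃ h, act h c.out = x := by
      rw [Quotient.mk_eq_iff_out, ← hclass, s.comm']
    refine (Nat.card_congr (Equiv.ofBijective (fun h => ⟨act h c.out, (hmem _).mpr ⟨h, rfl⟩⟩)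
      ⟨fun h₁ h₂ hh => hinj c.out (congrArg Subtype.val hh), fun x => ?_⟩)).symm
    obtain ⟨h, hh⟩ := (hmem x).mp x.2
    exact ⟨h, Subtype.ext hh⟩
  rw [← Nat.card_congr (Equiv.sigmaFiberEquiv (Quotient.mk s)), Nat.card_sigma]
  simp [hfiber, Nat.card_eq_fintype_card]

theorem sum_card_fiber_mul {α β R : Type*} [Fintype α] [Fintype β] [DecidableEq β]
    [NonAssocSemiring R] (f : α → β) (F : β → R) :
    ∑ b, (Nat.card {a // f a = b} : R) * F b = ∑ a, F (f a) := by
  rw [← Fintype.sum_fiberwise f (fun a => F (f a))]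
  refine Finset.sum_congr rfl fun b _ => ?_
  rw [Finset.sum_congr rfl fun a _ => congrArg F a.2, Finset.sum_const, Finset.card_univ,
    nsmul_eq_mul, Nat.card_eq_fintype_card]

theorem apply_eq_self_of_mem_zpowers {Γ X : Type*} [Group Γ] (ρ : Γ →* Equiv.Perm X) {γ δ : Γ}
    {x : X} (hx : ρ γ x = x) (hδ : δ ∈ Subgroup.zpowers γ) : ρ δ x = x := by
  obtain ⟨k, rfl⟩ := Subgroup.mem_zpowers_iff.mp hδ
  rw [map_zpow]
  exact Equiv.Perm.zpow_apply_eq_self_of_apply_eq_self hx k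

theorem ramification_term_eq_zero_or_one_le (w : ℕ) {r : ℕ} (hr : 0 < r) :
    2 * (1 - 1 / (r : ℚ)) + w = 0 ∨ 1 ≤ 2 * (1 - 1 / (r : ℚ)) + w := by
  obtain rfl | hr2 := (Nat.one_le_iff_ne_zero.mpr hr.ne').eq_or_lt
  · rcases Nat.eq_zero_or_pos w with rfl | hw
    · simp
    · right
      simp only [Nat.cast_one, div_one, sub_self, mul_zero, zero_add]
      exact_mod_cast hw
  · right
    have : 1 / (r : ℚ) ≤ 1 / 2 := by
      gcongr
      exact_mod_cast hr2
    have : (0 : ℚ) ≤ w := w.cast_nonneg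
    linarith

namespace Multigraph

variable {G : Multigraph}

theorem ne_of_ends_eq {e : G.E} {a b : G.V} (h : G.ends e = s(a, b)) : a ≠ b := fun hab =>
  G.loopless e (by rw [h, hab]; exact Sym2.mk_isDiag_iff.mpr rfl)

theorem exists_ends_eq (e : G.E) : ∃ a b, G.ends e = s(a, b) := by
  obtain ⟨⟨a, b⟩, hab⟩ := Quot.exists_rep (G.ends e)
  exact ⟨a, b, hab.symm⟩

theorem card_mem_ends (e : G.E) : Nat.card {x // x ∈ G.ends e} = 2 := by
  obtain ⟨a, b, hab⟩ := G.exists_ends_eq e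
  rw [← Set.ncard_pair (G.ne_of_ends_eq hab), ← Nat.card_coe_set_eq, hab]
  exact Nat.card_congr (Equiv.subtypeEquivRight fun x => by simp)

theorem sum_card_incident_eq_two_mul (p : G.E → Prop) :
    ∑ x, Nat.card {e // x ∈ G.ends e ∧ p e} = 2 * Nat.card {e // p e} := by
  let darts : (Σ x : G.V, {e // x ∈ G.ends e ∧ p e}) ≃ Σ e : {e // p e}, {x // x ∈ G.ends e} :=
    { toFun := fun d => ⟨⟨d.2, d.2.2.2⟩, ⟨d.1, d.2.2.1⟩⟩
      invFun := fun d => ⟨d.2, d.1, d.2.2, d.1.2⟩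
      left_inv := fun _ => rfl
      right_inv := fun _ => rfl }
  rw [← Nat.card_sigma, Nat.card_congr darts, Nat.card_sigma]
  simp only [card_mem_ends]
  simp [Nat.card_eq_fintype_card, mul_comm]

theorem induction_on_edges {P : G.V → Prop} {x : G.V} (hx : P x)
    (step : ∀ e u v, G.ends e = s(u, v) → P u → P v) (v : G.V) : P v := by
  obtain ⟨w⟩ := G.connected.preconnected x v
  induction w with
  | nil => exact hx
  | cons h _ ih =>
    obtain ⟨-, ⟨e, he⟩ | ⟨e, he⟩⟩ := (SimpleGraph.fromRel_adj _ _ _).mp h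
    · exact ih (step e _ _ he hx)
    · exact ih (step e _ _ (he.trans Sym2.eq_swap) hx)

end Multigraph

namespace GraphAction

variable {Γ : Type} [Group Γ] {G : Multigraph}

theorem finite (A : GraphAction Γ G) : Finite Γ :=
  Finite.of_injective (fun γ => (A.actV γ, A.actE γ)) fun a b h => by
    obtain ⟨hV, hE⟩ := Prod.mk.inj h
    refine mul_inv_eq_one.mp (A.faithful _ (fun x => ?_) (fun e => ?_))
    · simp [hV]
    · simp [hE]

variable (A : GraphAction Γ G)

theorem actE_eq_actE_iff {γ δ : Γ} {e : G.E} :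
    A.actE γ e = A.actE δ e ↔ A.actE (δ⁻¹ * γ) e = e := by
  rw [map_mul, map_inv, Equiv.Perm.mul_apply, Equiv.Perm.inv_eq_iff_eq]

theorem actV_mem_ends_actE_iff (γ : Γ) {x : G.V} {e : G.E} :
    A.actV γ x ∈ G.ends (A.actE γ e) ↔ x ∈ G.ends e := by
  simp [A.ends_map, Sym2.mem_map]

theorem not_vertical_of_mem_ends_of_fixed {Δ : Subgroup Γ} {v : G.V}
    (hv : ∀ δ ∈ Δ, A.actV δ v = v) {e : G.E} (hve : v ∈ G.ends e) : ¬ A.Vertical Δ e := by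
  rintro ⟨a, b, hab, δ, hδ, rfl⟩
  apply G.ne_of_ends_eq hab
  rcases Sym2.mem_iff.mp (hab ▸ hve) with rfl | rfl
  · exact (hv δ hδ).symm
  · simpa using hv δ⁻¹ (Δ.inv_mem hδ)

/-- Harmonicity of `G → G/⟨γ⟩` at `v`: the fixed edge `f` is alone in its orbit among the
edges at `v`, so the orbit of every edge at `v` meets the edges at `v` only once. -/
theorem actE_eq_self_of_fixes_incident (hA : A.ActsHarmonically) {γ : Γ} {v : G.V}
    (hv : A.actV γ v = v) {f : G.E} (hvf : v ∈ G.ends f) (hf : A.actE γ f = f) {e : G.E}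
    (hve : v ∈ G.ends e) : A.actE γ e = e := by
  set Δ := Subgroup.zpowers γ
  have hvΔ (δ) (hδ : δ ∈ Δ) : A.actV δ v = v := apply_eq_self_of_mem_zpowers A.actV hv hδ
  have hself (e : G.E) (hve : v ∈ G.ends e) : ∃ w ∈ G.ends e, A.vrel Δ v w :=
    ⟨v, hve, 1, Δ.one_mem, by simp⟩
  have hharm := (hA Δ).1 v e f (A.not_vertical_of_mem_ends_of_fixed hvΔ hve)
    (A.not_vertical_of_mem_ends_of_fixed hvΔ hvf) (hself e hve) (hself f hvf)
  have horbit_f : Subsingleton {h : G.E // v ∈ G.ends h ∧ A.erel Δ h f} := by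
    have heq (h : {h : G.E // v ∈ G.ends h ∧ A.erel Δ h f}) : h.1 = f := by
      obtain ⟨h, -, δ, hδ, hδh⟩ := h
      exact (A.actE δ).injective (hδh.trans (apply_eq_self_of_mem_zpowers A.actE hf hδ).symm)
    exact ⟨fun h₁ h₂ => Subtype.ext ((heq h₁).trans (heq h₂).symm)⟩
  have horbit_e : Subsingleton {h : G.E // v ∈ G.ends h ∧ A.erel Δ h e} := by
    rw [← Finite.card_le_one_iff_subsingleton, hharm]
    exact Finite.card_le_one_iff_subsingleton.mpr horbit_f
  have hγe : v ∈ G.ends (A.actE γ e) := by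
    simpa [hv] using (A.actV_mem_ends_actE_iff γ).mpr hve
  have hrel : A.erel Δ (A.actE γ e) e := ⟨γ⁻¹, Δ.inv_mem (Subgroup.mem_zpowers γ), by simp⟩
  exact congrArg Subtype.val (horbit_e.elim ⟨_, hγe, hrel⟩ ⟨e, hve, 1, Δ.one_mem, by simp⟩)

theorem eq_one_of_fixes_incident (hA : A.ActsHarmonically) {γ : Γ} {x : G.V} {e : G.E}
    (hx : A.actV γ x = x) (hxe : x ∈ G.ends e) (he : A.actE γ e = e) : γ = 1 := by
  have hfixed : ∀ v, A.actV γ v = v ∧ ∃ f, v ∈ G.ends f ∧ A.actE γ f = f := by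
    refine G.induction_on_edges ⟨hx, e, hxe, he⟩ fun f u v huv ⟨hu, f', huf', hf'⟩ => ?_
    have hf : A.actE γ f = f :=
      A.actE_eq_self_of_fixes_incident hA hu huf' hf' (huv ▸ Sym2.mem_mk_left u v)
    have hmap := A.ends_map γ f
    rw [hf, huv, Sym2.map_mk, hu] at hmap
    exact ⟨(Sym2.congr_right.mp hmap).symm, f, huv ▸ Sym2.mem_mk_right u v, hf⟩
  refine A.faithful γ (fun v => (hfixed v).1) fun f => ?_
  obtain ⟨a, b, hab⟩ := G.exists_ends_eq f
  obtain ⟨ha, f', haf', hf'⟩ := hfixed a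
  exact A.actE_eq_self_of_fixes_incident hA ha haf' hf' (hab ▸ Sym2.mem_mk_left a b)

theorem eq_one_of_fixes_nonvertical (hA : A.ActsHarmonically) {γ : Γ} {e : G.E}
    (he : ¬ A.Vertical ⊤ e) (hγ : A.actE γ e = e) : γ = 1 := by
  obtain ⟨a, b, hab⟩ := G.exists_ends_eq e
  have hmap := A.ends_map γ e
  rw [hγ, hab, Sym2.map_mk] at hmap
  rcases Sym2.eq_iff.mp hmap.symm with ⟨ha, -⟩ | ⟨ha, -⟩
  · exact A.eq_one_of_fixes_incident hA ha (hab ▸ Sym2.mem_mk_left a b) hγ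
  · exact absurd ⟨a, b, hab, γ, Subgroup.mem_top γ, ha⟩ he

theorem vertical_top_actE (γ : Γ) {e : G.E} (he : A.Vertical ⊤ e) :
    A.Vertical ⊤ (A.actE γ e) := by
  obtain ⟨a, b, hab, δ, -, rfl⟩ := he
  refine ⟨A.actV γ a, A.actV γ (A.actV δ a), by rw [A.ends_map, hab, Sym2.map_mk],
    γ * δ * γ⁻¹, Subgroup.mem_top _, ?_⟩
  simp

theorem vertical_top_actE_iff (γ : Γ) {e : G.E} :
    A.Vertical ⊤ (A.actE γ e) ↔ A.Vertical ⊤ e :=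
  ⟨fun h => by simpa using A.vertical_top_actE γ⁻¹ h, A.vertical_top_actE γ⟩

theorem vertMult_top_actV (γ : Γ) (x : G.V) : A.vertMult ⊤ (A.actV γ x) = A.vertMult ⊤ x :=
  Nat.card_congr (Equiv.subtypeEquiv (A.actE γ) fun e => by
    rw [A.actV_mem_ends_actE_iff, A.vertical_top_actE_iff]).symm

theorem mk_top_eq_iff {x : G.V} {y : A.quotV ⊤} :
    Quotient.mk (A.vSetoid ⊤) x = y ↔ ∃ γ, A.actV γ y.out = x := by
  rw [eq_comm, Quotient.eq_mk_iff_out]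
  exact ⟨fun ⟨γ, _, h⟩ => ⟨γ, h⟩, fun ⟨γ, h⟩ => ⟨γ, Subgroup.mem_top γ, h⟩⟩

theorem card_fiber_mul_r (y : A.quotV ⊤) :
    Nat.card {x // Quotient.mk (A.vSetoid ⊤) x = y} * A.r ⊤ y = Nat.card Γ := by
  let := MulAction.compHom G.V A.actV
  have horbit : Nat.card {x // Quotient.mk (A.vSetoid ⊤) x = y} =
      (MulAction.orbit Γ y.out).ncard := by
    rw [← Nat.card_coe_set_eq]
    exact Nat.card_congr (Equiv.subtypeEquivRight fun x => A.mk_top_eq_iff)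
  have hstab : A.r ⊤ y = Nat.card (MulAction.stabilizer Γ y.out) :=
    Nat.card_congr (Equiv.subtypeEquivRight fun γ => by
      simp only [Subgroup.mem_top, true_and, MulAction.mem_stabilizer_iff]
      rfl)
  rw [horbit, hstab, ← MulAction.index_stabilizer, Subgroup.index_mul_card]

theorem r_pos (Δ : Subgroup Γ) (y : A.quotV Δ) : 0 < A.r Δ y :=
  have := A.finite
  have : Nonempty {γ : Γ // γ ∈ Δ ∧ A.actV γ y.out = y.out} := ⟨⟨1, Δ.one_mem, by simp⟩⟩
  Nat.card_pos

theorem card_eq_card_quotient_mul_card_of_free (Δ : Subgroup Γ) (p : G.E → Prop)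
    (hp : ∀ δ ∈ Δ, ∀ e, p e → p (A.actE δ e))
    (hfree : ∀ δ ∈ Δ, ∀ e, p e → A.actE δ e = e → δ = 1) :
    Nat.card {e // p e} =
      Nat.card (Quotient ((A.eSetoid Δ).comap (Subtype.val : {e // p e} → G.E))) * Nat.card Δ :=
  Setoid.card_eq_card_quotient_mul_card_of_injective _
    (fun δ e => ⟨A.actE δ e, hp δ δ.2 e e.2⟩)
    (fun e f => ⟨fun ⟨δ, hδ, h⟩ => ⟨⟨δ, hδ⟩, Subtype.ext h⟩,
      fun ⟨δ, h⟩ => ⟨δ, δ.2, congrArg Subtype.val h⟩⟩)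
    (fun e δ₁ δ₂ h => by
      have hfix := A.actE_eq_actE_iff.mp (congrArg Subtype.val h)
      have hone := hfree _ (Δ.mul_mem (Δ.inv_mem δ₂.2) δ₁.2) e e.2 hfix
      exact Subtype.ext (inv_mul_eq_one.mp hone).symm)

theorem card_not_vertical_top (hA : A.ActsHarmonically) :
    Nat.card {e // ¬ A.Vertical ⊤ e} = Nat.card (A.quotE ⊤) * Nat.card Γ := by
  rw [A.card_eq_card_quotient_mul_card_of_free ⊤ _
    (fun δ _ e he => (A.vertical_top_actE_iff δ).not.mpr he)
    (fun δ _ e he hδ => A.eq_one_of_fixes_nonvertical hA he hδ), Subgroup.card_top]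

def vertexStabilizer (x : G.V) : Subgroup Γ :=
  (MulAction.stabilizer (Equiv.Perm G.V) x).comap A.actV

theorem mem_vertexStabilizer {γ : Γ} {x : G.V} : γ ∈ A.vertexStabilizer x ↔ A.actV γ x = x :=
  Iff.rfl

theorem stabOrder_top_dvd_vertMult (hA : A.ActsHarmonically) (x : G.V) :
    A.stabOrder ⊤ x ∣ A.vertMult ⊤ x := by
  have hstab : A.stabOrder ⊤ x = Nat.card (A.vertexStabilizer x) :=
    Nat.card_congr (Equiv.subtypeEquivRight fun γ => by simp [mem_vertexStabilizer])
  have hcount := A.card_eq_card_quotient_mul_card_of_free (A.vertexStabilizer x)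
    (fun e => x ∈ G.ends e ∧ A.Vertical ⊤ e)
    (fun δ hδ e ⟨hxe, hv⟩ => ⟨by
      simpa [A.mem_vertexStabilizer.mp hδ] using (A.actV_mem_ends_actE_iff δ).mpr hxe,
      (A.vertical_top_actE_iff δ).mpr hv⟩)
    (fun δ hδ e ⟨hxe, _⟩ he =>
      A.eq_one_of_fixes_incident hA (A.mem_vertexStabilizer.mp hδ) hxe he)
  rw [hstab, vertMult, hcount]
  exact dvd_mul_left _ _

theorem card_mul_ram_top (hA : A.ActsHarmonically) :
    (Nat.card Γ : ℚ) * A.ram ⊤ = 2 * Nat.card Γ * Nat.card (A.quotV ⊤) - 2 * Fintype.card G.V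
      + 2 * Nat.card {e // A.Vertical ⊤ e} := by
  set fiber : A.quotV ⊤ → ℚ := fun y => Nat.card {x // Quotient.mk (A.vSetoid ⊤) x = y}
  have hterm (y : A.quotV ⊤) : (Nat.card Γ : ℚ) * (2 * (1 - 1 / (A.r ⊤ y : ℚ)) + A.w ⊤ y) =
      2 * Nat.card Γ - 2 * fiber y + fiber y * A.vertMult ⊤ y.out := by
    have hn : (Nat.card Γ : ℚ) = fiber y * A.r ⊤ y := by
      simp only [fiber]
      exact_mod_cast (A.card_fiber_mul_r y).symm
    have hw : (A.w ⊤ y : ℚ) * A.r ⊤ y = A.vertMult ⊤ y.out := by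
      exact_mod_cast Nat.div_mul_cancel (A.stabOrder_top_dvd_vertMult hA y.out)
    have hr : (A.r ⊤ y : ℚ) ≠ 0 := by exact_mod_cast (A.r_pos ⊤ y).ne'
    rw [← hw, hn]
    field_simp
  have hV : ∑ y, 2 * fiber y = 2 * Fintype.card G.V := by
    rw [← Finset.mul_sum]
    simpa [fiber, Nat.card_eq_fintype_card] using
      sum_card_fiber_mul (Quotient.mk (A.vSetoid ⊤)) fun _ => (1 : ℚ)
  have hvert : ∑ y, fiber y * A.vertMult ⊤ y.out = 2 * Nat.card {e // A.Vertical ⊤ e} := by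
    rw [sum_card_fiber_mul (Quotient.mk (A.vSetoid ⊤)) fun y => (A.vertMult ⊤ y.out : ℚ)]
    have hinv (x : G.V) : A.vertMult ⊤ (Quotient.mk (A.vSetoid ⊤) x).out = A.vertMult ⊤ x := by
      obtain ⟨γ, hγ⟩ := A.mk_top_eq_iff.mp (rfl : Quotient.mk (A.vSetoid ⊤) x = _)
      have := A.vertMult_top_actV γ (Quotient.mk (A.vSetoid ⊤) x).out
      rw [hγ] at this
      exact this.symm
    simp only [hinv]
    exact_mod_cast G.sum_card_incident_eq_two_mul (A.Vertical ⊤)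
  rw [ram, finsum_eq_sum_of_fintype, Finset.mul_sum, Finset.sum_congr rfl fun y _ => hterm y,
    Finset.sum_add_distrib, Finset.sum_sub_distrib, hV, hvert]
  simp [Nat.card_eq_fintype_card]
  ring

theorem riemann_hurwitz (hA : A.ActsHarmonically) :
    2 * ((G.genus : ℚ) - 1) = Nat.card Γ * (2 * ((A.quotGenus ⊤ : ℚ) - 1) + A.ram ⊤) := by
  have hE : (Fintype.card G.E : ℚ) =
      Nat.card {e // A.Vertical ⊤ e} + Nat.card (A.quotE ⊤) * Nat.card Γ := by
    rw [← Nat.card_eq_fintype_card, ← Nat.card_congr (Equiv.sumCompl (A.Vertical ⊤)), Nat.card_sum,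
      A.card_not_vertical_top hA]
    push_cast
    ring
  rw [mul_add, A.card_mul_ram_top hA, Multigraph.genus, quotGenus]
  push_cast
  rw [hE]
  ring

def quotEnds (Δ : Subgroup Γ) : A.quotE Δ → Sym2 (A.quotV Δ) :=
  Quotient.lift (fun e => (G.ends e.1).map (Quotient.mk (A.vSetoid Δ))) <| by
    rintro ⟨e, -⟩ ⟨f, -⟩ ⟨δ, hδ, rfl⟩
    simp only [A.ends_map, Sym2.map_map]
    exact Sym2.map_congr fun x _ => Quotient.sound ⟨δ, hδ, rfl⟩

def quotGraph (Δ : Subgroup Γ) : SimpleGraph (A.quotV Δ) :=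
  SimpleGraph.fromRel fun a b => ∃ c, A.quotEnds Δ c = s(a, b)

theorem quotGraph_connected (Δ : Subgroup Γ) : (A.quotGraph Δ).Connected := by
  obtain ⟨x₀⟩ := G.connected.nonempty
  have hreach : ∀ x, (A.quotGraph Δ).Reachable (Quotient.mk _ x₀) (Quotient.mk _ x) := by
    refine G.induction_on_edges (SimpleGraph.Reachable.refl _) fun e u v huv hu => hu.trans ?_
    by_cases hmk : Quotient.mk (A.vSetoid Δ) u = Quotient.mk _ v
    · rw [hmk]
    have hnv : ¬ A.Vertical Δ e := by
      rintro ⟨a, b, hab, hrel⟩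
      rcases Sym2.eq_iff.mp (huv.symm.trans hab) with ⟨rfl, rfl⟩ | ⟨rfl, rfl⟩
      · exact hmk (Quotient.sound hrel)
      · exact hmk (Quotient.sound hrel).symm
    refine SimpleGraph.Adj.reachable ((SimpleGraph.fromRel_adj _ _ _).mpr
      ⟨hmk, Or.inl ⟨Quotient.mk _ ⟨e, hnv⟩, ?_⟩⟩)
    change (G.ends e).map _ = _
    rw [huv, Sym2.map_mk]
  have : Nonempty (A.quotV Δ) := ⟨Quotient.mk _ x₀⟩
  refine ⟨fun a b => ?_⟩
  induction a, b using Quotient.inductionOn₂ with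
  | h a b => exact (hreach a).symm.trans (hreach b)

theorem quotGenus_nonneg (Δ : Subgroup Γ) : 0 ≤ A.quotGenus Δ := by
  have hV := (A.quotGraph_connected Δ).card_vert_le_card_edgeSet_add_one
  have hE : Nat.card (A.quotGraph Δ).edgeSet ≤ Nat.card (A.quotE Δ) := by
    have hsub : (A.quotGraph Δ).edgeSet ⊆ Set.range (A.quotEnds Δ) := by
      intro z
      induction z using Sym2.ind with
      | h a b =>
        intro hab
        rw [SimpleGraph.mem_edgeSet, quotGraph, SimpleGraph.fromRel_adj] at hab
        obtain ⟨-, ⟨c, hc⟩ | ⟨c, hc⟩⟩ := hab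
        · exact ⟨c, hc⟩
        · exact ⟨c, hc.trans Sym2.eq_swap⟩
    exact (Nat.card_mono (Set.finite_range _) hsub).trans
      (Nat.card_le_card_of_surjective _ Set.rangeFactorization_surjective)
  unfold quotGenus
  omega

theorem ram_eq_zero_or_one_le (Δ : Subgroup Γ) : A.ram Δ = 0 ∨ 1 ≤ A.ram Δ := by
  have hterm (y) := ramification_term_eq_zero_or_one_le (A.w Δ y) (A.r_pos Δ y)
  rw [ram, finsum_eq_sum_of_fintype]
  by_cases hzero : ∀ y, 2 * (1 - 1 / (A.r Δ y : ℚ)) + A.w Δ y = 0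
  · exact Or.inl (Finset.sum_eq_zero fun y _ => hzero y)
  obtain ⟨y, hy⟩ := not_forall.mp hzero
  refine Or.inr ((hterm y).resolve_left hy |>.trans ?_)
  exact Finset.single_le_sum (fun z _ => (hterm z).elim (·.ge) (zero_le_one.trans ·))
    (Finset.mem_univ y)

end GraphAction

/-- Let `Γ` act harmonically on `G` of genus `g ≥ 2`. If the quotient
has genus at least 1, then `|Γ| ≤ 2(g−1)`; more precisely if `R = 0` then `g(G/Γ) ≥ 2`
and `|Γ|·(g(G/Γ) − 1) = g − 1` (so `|Γ| ≤ g − 1`), while if `R ≠ 0` then `|Γ| ≤ 2g − 2`.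
Consequently, if `|Γ| > 2(g−1)` then `g(G/Γ) = 0`. -/
theorem quotient_positive_genus_bound {Γ : Type} [Group Γ] {G : Multigraph}
    (A : GraphAction Γ G) (hA : A.ActsHarmonically) (g : ℤ) (hg : G.genus = g)
    (h2 : 2 ≤ g) :
    (1 ≤ A.quotGenus ⊤ →
      (Nat.card Γ : ℤ) ≤ 2 * (g - 1) ∧
      (A.ram ⊤ = 0 →
        2 ≤ A.quotGenus ⊤ ∧ (Nat.card Γ : ℤ) * (A.quotGenus ⊤ - 1) = g - 1 ∧
        (Nat.card Γ : ℤ) ≤ g - 1) ∧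
      (A.ram ⊤ ≠ 0 → (Nat.card Γ : ℤ) ≤ 2 * g - 2)) ∧
    (2 * (g - 1) < (Nat.card Γ : ℤ) → A.quotGenus ⊤ = 0) := by
  have := A.finite
  have hn : (1 : ℤ) ≤ Nat.card Γ := by exact_mod_cast Nat.card_pos
  have hq := A.quotGenus_nonneg ⊤
  have hRH := A.riemann_hurwitz hA
  rw [hg] at hRH
  rcases A.ram_eq_zero_or_one_le ⊤ with hR | hR
  · have hunram : (Nat.card Γ : ℤ) * (A.quotGenus ⊤ - 1) = g - 1 := by
      rw [hR] at hRH
      exact_mod_cast (by linarith : (Nat.card Γ : ℚ) * (A.quotGenus ⊤ - 1) = g - 1)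
    have hq2 : 2 ≤ A.quotGenus ⊤ := by nlinarith
    have hle : (Nat.card Γ : ℤ) ≤ g - 1 := by nlinarith
    exact ⟨fun _ => ⟨by linarith, fun _ => ⟨hq2, hunram, hle⟩, absurd hR⟩, fun _ => by linarith⟩
  · have hram : (Nat.card Γ : ℤ) * (2 * (A.quotGenus ⊤ - 1) + 1) ≤ 2 * (g - 1) := by
      have : (Nat.card Γ : ℚ) * (2 * (A.quotGenus ⊤ - 1) + 1) ≤ 2 * (g - 1) := by
        rw [hRH]
        gcongr
      exact_mod_cast this
    have hbound (hq1 : 1 ≤ A.quotGenus ⊤) : (Nat.card Γ : ℤ) ≤ 2 * (g - 1) := by nlinarith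
    refine ⟨fun hq1 => ⟨hbound hq1, fun h => ?_, fun _ => by linarith [hbound hq1]⟩, fun h => ?_⟩
    · exact absurd hR (by rw [h]; norm_num)
    · by_contra hne
      linarith [hbound (by omega)]
end

section
/- There exists a graph G of genus 2 on which the group ℤ/3ℤ × ℤ/2ℤ of order 6 = 6(2 − 1) acts harmonically; namely, the graph obtained by joining two copies of the rooted tree with three edges emanating from the root via three edges between the two roots. -/
open scoped Classical

/-!
The group acts by translations: `ZMod 3` rotates the three leaves of each tree together with
the three edges joining the roots, and `ZMod 2` swaps the two trees. The graph has 9 edges and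
8 vertices, so genus 2. Since 3 and 2 are coprime, every subgroup of `ZMod 3 × ZMod 2` is a
product of subgroups of the factors, i.e. one of four subgroups, and for each of them
harmonicity and non-degeneracy of the quotient map is a finite check.
-/

namespace Subgroup

variable {G N : Type*} [Group G] [Group N]

theorem mk_mem_of_coprime_card (hGN : (Nat.card G).Coprime (Nat.card N))
    {Δ : Subgroup (G × N)} {g : G × N} (hg : g ∈ Δ) : (g.1, 1) ∈ Δ ∧ (1, g.2) ∈ Δ := by
  set m := Nat.card G
  set n := Nat.card N
  have bezout : (1 : ℤ) = m * m.gcdA n + n * m.gcdB n := by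
    rw [← Nat.gcd_eq_gcd_ab, hGN, Nat.cast_one]
  have hG : g.1 ^ m = 1 := pow_card_eq_one'
  have hN : g.2 ^ n = 1 := pow_card_eq_one'
  constructor
  · convert Δ.zpow_mem hg (n * m.gcdB n) using 1
    ext
    · rw [Prod.pow_fst, eq_sub_of_add_eq' bezout.symm, zpow_sub, zpow_one, zpow_mul, zpow_natCast,
        hG, one_zpow, inv_one, mul_one]
    · rw [Prod.pow_snd, zpow_mul, zpow_natCast, hN, one_zpow]
  · convert Δ.zpow_mem hg (m * m.gcdA n) using 1
    ext
    · rw [Prod.pow_fst, zpow_mul, zpow_natCast, hG, one_zpow]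
    · rw [Prod.pow_snd, eq_sub_of_add_eq bezout.symm, zpow_sub, zpow_one, zpow_mul, zpow_natCast,
        hN, one_zpow, inv_one, mul_one]

theorem eq_prod_map_of_coprime_card (hGN : (Nat.card G).Coprime (Nat.card N))
    (Δ : Subgroup (G × N)) :
    Δ = (Δ.map (MonoidHom.fst G N)).prod (Δ.map (MonoidHom.snd G N)) := by
  refine le_antisymm (le_prod_iff.2 ⟨le_rfl, le_rfl⟩) (prod_le_iff.2 ⟨?_, ?_⟩)
  · rintro _ ⟨_, ⟨g, hg, rfl⟩, rfl⟩
    exact (mk_mem_of_coprime_card hGN hg).1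
  · rintro _ ⟨_, ⟨g, hg, rfl⟩, rfl⟩
    exact (mk_mem_of_coprime_card hGN hg).2

instance decidableMemBot [DecidableEq G] : DecidablePred (· ∈ (⊥ : Subgroup G)) :=
  fun _ => decidable_of_iff _ mem_bot.symm

instance decidableMemTop : DecidablePred (· ∈ (⊤ : Subgroup G)) :=
  fun _ => isTrue (mem_top _)

instance decidableMemProd {H : Subgroup G} {K : Subgroup N} [DecidablePred (· ∈ H)]
    [DecidablePred (· ∈ K)] : DecidablePred (· ∈ H.prod K) :=
  fun _ => decidable_of_iff _ mem_prod.symm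

end Subgroup

namespace GraphAction

variable {Γ : Type} [Group Γ] [Fintype Γ] {G : Multigraph} (A : GraphAction Γ G)
  (Δ : Subgroup Γ) [DecidablePred (· ∈ Δ)]

instance decidableVrel [DecidableEq G.V] (x y : G.V) : Decidable (A.vrel Δ x y) :=
  inferInstanceAs (Decidable (∃ δ ∈ Δ, A.actV δ x = y))

instance decidableErel [DecidableEq G.E] (e f : G.E) : Decidable (A.erel Δ e f) :=
  inferInstanceAs (Decidable (∃ δ ∈ Δ, A.actE δ e = f))

instance decidableVertical [DecidableEq G.V] (e : G.E) : Decidable (A.Vertical Δ e) :=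
  inferInstanceAs (Decidable (∃ x y, G.ends e = s(x, y) ∧ A.vrel Δ x y))

end GraphAction

namespace HurwitzGenusTwo

abbrev Γ₆ := Multiplicative (ZMod 3) × Multiplicative (ZMod 2)

/- `inl s` is the root of the `s`-th tree and `inr (s, i)` its `i`-th leaf; the edge `inl i`
is the `i`-th edge between the two roots and `inr (s, i)` joins the root `s` to the leaf
`(s, i)`. -/
abbrev Vert := ZMod 2 ⊕ ZMod 2 × ZMod 3
abbrev Edge := ZMod 3 ⊕ ZMod 2 × ZMod 3

def ends : Edge → Sym2 Vert
  | .inl _ => s(.inl 0, .inl 1)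
  | .inr p => s(.inl p.1, .inr p)

lemma connected : (SimpleGraph.fromRel fun x y : Vert => ∃ e, ends e = s(x, y)).Connected := by
  set T := SimpleGraph.fromRel fun x y : Vert => ∃ e, ends e = s(x, y)
  have root_reachable (s : ZMod 2) : T.Reachable (.inl 0) (.inl s) := by
    have roots_adj : T.Adj (.inl 0) (.inl 1) := ⟨by decide, .inl ⟨.inl 0, rfl⟩⟩
    fin_cases s
    exacts [.rfl, roots_adj.reachable]
  have leaf_adj (p : ZMod 2 × ZMod 3) : T.Adj (.inl p.1) (.inr p) := ⟨by simp, .inl ⟨.inr p, rfl⟩⟩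
  refine (SimpleGraph.connected_iff_exists_forall_reachable T).2 ⟨.inl 0, ?_⟩
  rintro (s | p)
  exacts [root_reachable s, (root_reachable p.1).trans (leaf_adj p).reachable]

abbrev graph : Multigraph where
  V := Vert
  E := Edge
  ends := ends
  loopless := by decide
  connected := connected

lemma genus_graph : graph.genus = 2 := by
  decide

def shift (γ : Γ₆) (p : ZMod 2 × ZMod 3) : ZMod 2 × ZMod 3 :=
  (p.1 + γ.2.toAdd, p.2 + γ.1.toAdd)

def vertShift (γ : Γ₆) : Vert → Vert := Sum.map (· + γ.2.toAdd) (shift γ)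

def edgeShift (γ : Γ₆) : Edge → Edge := Sum.map (· + γ.1.toAdd) (shift γ)

lemma vertShift_one : ∀ v, vertShift 1 v = v := by decide

lemma vertShift_mul : ∀ γ γ' v, vertShift (γ * γ') v = vertShift γ (vertShift γ' v) := by
  decide

lemma edgeShift_one : ∀ e, edgeShift 1 e = e := by decide

lemma edgeShift_mul : ∀ γ γ' e, edgeShift (γ * γ') e = edgeShift γ (edgeShift γ' e) := by
  decide

lemma ends_edgeShift : ∀ γ e, ends (edgeShift γ e) = (ends e).map (vertShift γ) := by decide

lemma eq_one_of_vertShift_eq_id : ∀ γ, vertShift γ = id → γ = 1 := by decide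

def vertShiftHom : Γ₆ →* Function.End Vert where
  toFun := vertShift
  map_one' := funext vertShift_one
  map_mul' γ γ' := funext (vertShift_mul γ γ')

def edgeShiftHom : Γ₆ →* Function.End Edge where
  toFun := edgeShift
  map_one' := funext edgeShift_one
  map_mul' γ γ' := funext (edgeShift_mul γ γ')

abbrev action : GraphAction Γ₆ graph where
  actV := vertShiftHom.toHomPerm
  actE := edgeShiftHom.toHomPerm
  ends_map := ends_edgeShift
  faithful γ h _ := eq_one_of_vertShift_eq_id γ (funext h)

lemma subgroup_eq_prod_bot_or_top (Δ : Subgroup Γ₆) :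
    ∃ (H : Subgroup (Multiplicative (ZMod 3))) (K : Subgroup (Multiplicative (ZMod 2))),
      (H = ⊥ ∨ H = ⊤) ∧ (K = ⊥ ∨ K = ⊤) ∧ Δ = H.prod K := by
  have card_three : Nat.card (Multiplicative (ZMod 3)) = 3 := Nat.card_zmod 3
  have card_two : Nat.card (Multiplicative (ZMod 2)) = 2 := Nat.card_zmod 2
  have : Fact (Nat.card (Multiplicative (ZMod 3))).Prime := ⟨card_three.symm ▸ Nat.prime_three⟩
  have : Fact (Nat.card (Multiplicative (ZMod 2))).Prime := ⟨card_two.symm ▸ Nat.prime_two⟩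
  exact ⟨_, _, Subgroup.eq_bot_or_eq_top_of_prime_card _, Subgroup.eq_bot_or_eq_top_of_prime_card _,
    Subgroup.eq_prod_map_of_coprime_card (by rw [card_three, card_two]; decide) Δ⟩

set_option synthInstance.maxSize 2000 in
lemma quotHarmonic_and_quotNondeg {H : Subgroup (Multiplicative (ZMod 3))}
    {K : Subgroup (Multiplicative (ZMod 2))} (hH : H = ⊥ ∨ H = ⊤) (hK : K = ⊥ ∨ K = ⊤) :
    action.QuotHarmonic (H.prod K) ∧ action.QuotNondeg (H.prod K) := by
  rcases hH with rfl | rfl <;> rcases hK with rfl | rfl <;>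
    exact ⟨by simp only [GraphAction.QuotHarmonic, Nat.card_eq_fintype_card]; decide,
      by unfold GraphAction.QuotNondeg; decide⟩

end HurwitzGenusTwo

/-- There is a graph of genus 2 on which the group
`ℤ/3ℤ × ℤ/2ℤ` of order `6 = 6(2 − 1)` acts harmonically. -/
theorem genus_two_hurwitz_action :
    ∃ (G : Multigraph)
      (A : GraphAction (Multiplicative (ZMod 3) × Multiplicative (ZMod 2)) G),
      G.genus = 2 ∧ A.ActsHarmonically := by
  refine ⟨HurwitzGenusTwo.graph, HurwitzGenusTwo.action, HurwitzGenusTwo.genus_graph,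
    fun Δ => ?_⟩
  obtain ⟨H, K, hH, hK, rfl⟩ := HurwitzGenusTwo.subgroup_eq_prod_bot_or_top Δ
  exact HurwitzGenusTwo.quotHarmonic_and_quotNondeg hH hK
end

section
/- Let g₁ > 1 be an integer, p a prime, and set g − 1 = p(g₁ − 1). Suppose a cyclic group C of order p acts harmonically on a graph G of genus g. If p > g₁ + 1, then the p-cyclic harmonic cover G → G/C is horizontally unramified, i.e., every vertex stabilizer C_x is trivial (equivalently m_{φ_C}(x) = 1 for every vertex x of G). -/
open scoped Classical

/-!
As `p` is odd, an edge fixed by `C` has fixed endpoints. At a vertex fixed by `C`, a fixed edge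
is a whole `C`-orbit by itself, while any other incident edge lies in an orbit of at least two
incident edges; harmonicity therefore forces all edges there to be fixed, and connectivity spreads
this over `G`, contradicting faithfulness. So `C` acts freely on edges.

Burnside's lemma now gives `|E| = p |E/C|` and `|V| + (p - 1) f = p |V/C|`, with `f` the number
of fixed vertices, and the quotient graph is connected, so `|V/C| ≤ |E/C| + 1`. The genus formula
turns into `(p - 1) f = p (g₁ - 1 + |V/C| - |E/C|) ≤ p g₁`; if `f > 0` then `p ∣ f`, whence
`p - 1 ≤ g₁`.
-/

theorem Equiv.Perm.apply_eq_self_of_apply_apply_eq_self {α : Type*} {σ : Equiv.Perm α}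
    (hσ : Odd (orderOf σ)) {x : α} (hx : σ (σ x) = x) : σ x = x := by
  obtain ⟨k, hk⟩ := hσ
  have hsq : Function.IsFixedPt ⇑(σ ^ 2) x := by rwa [Function.IsFixedPt, sq, Equiv.Perm.mul_apply]
  have h := hsq.perm_pow (k + 1)
  rwa [Function.IsFixedPt, ← pow_mul, show 2 * (k + 1) = orderOf σ + 1 by omega, pow_succ,
    pow_orderOf_eq_one, one_mul] at h

theorem Equiv.Perm.apply_eq_self_of_mem_of_map_eq {α : Type*} {σ : Equiv.Perm α}
    (hσ : Odd (orderOf σ)) {z : Sym2 α} (hz : z.map σ = z) {x : α} (hx : x ∈ z) : σ x = x := by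
  obtain ⟨y, rfl⟩ := Sym2.mem_iff_exists.mp hx
  rw [Sym2.map_mk, Sym2.eq_iff] at hz
  rcases hz with ⟨hx', -⟩ | ⟨hxy, hyx⟩
  · exact hx'
  · exact σ.apply_eq_self_of_apply_apply_eq_self hσ (by rw [hxy, hyx])

theorem Int.sub_one_le_of_sub_one_mul_eq_mul {p f m : ℤ} (hp : 0 < p) (hf : 0 < f)
    (h : (p - 1) * f = p * m) : p - 1 ≤ m := by
  have hcop : IsCoprime p (p - 1) := ⟨1, -1, by ring⟩
  have hpf : p ≤ f := Int.le_of_dvd hf (hcop.dvd_of_dvd_mul_left ⟨m, h⟩)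
  nlinarith

section PrimeOrder

open MulAction

variable {Γ α : Type*} [Group Γ] [MulAction Γ α] {p : ℕ}

theorem MulAction.fixedBy_eq_fixedPoints_of_prime_card (hp : p.Prime) (hΓ : Nat.card Γ = p)
    {g : Γ} (hg : g ≠ 1) : fixedBy α g = fixedPoints Γ α := by
  have : Fact p.Prime := ⟨hp⟩
  refine Set.Subset.antisymm (fun x hx δ => ?_) (fun x hx => hx g)
  obtain ⟨j, rfl⟩ := Subgroup.mem_zpowers_iff.mp (mem_zpowers_of_prime_card hΓ hg (g' := δ))
  exact mem_fixedBy_zpow hx j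

/-- Burnside's lemma, in which every non-identity element fixes exactly the global fixed points. -/
theorem MulAction.card_add_mul_card_fixedPoints_of_prime_card [Finite α] (hp : p.Prime)
    (hΓ : Nat.card Γ = p) :
    Nat.card α + (p - 1) * Nat.card (fixedPoints Γ α) = p * Nat.card (orbitRel.Quotient Γ α) := by
  classical
  have : Finite Γ := Nat.finite_of_card_ne_zero (hΓ ▸ hp.ne_zero)
  have := Fintype.ofFinite Γ
  have := Fintype.ofFinite α
  have burnside := sum_card_fixedBy_eq_card_orbits_mul_card_group Γ α
  simp only [Fintype.card_eq_nat_card] at burnside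
  rw [← Finset.add_sum_erase _ _ (Finset.mem_univ 1),
    Finset.sum_congr rfl fun g hg => by
      rw [fixedBy_eq_fixedPoints_of_prime_card hp hΓ (Finset.ne_of_mem_erase hg)],
    Finset.sum_const, Finset.card_erase_of_mem (Finset.mem_univ 1), Finset.card_univ,
    Fintype.card_eq_nat_card, hΓ, fixedBy_one_eq_univ, Nat.card_univ, smul_eq_mul] at burnside
  linarith

end PrimeOrder

section QuotientGraph

open SimpleGraph MulAction

variable {V E W E' : Type*}

theorem card_le_card_add_one_of_connected [Finite E] (ends : E → Sym2 V)
    (h : (fromRel fun x y => ∃ e, ends e = s(x, y)).Connected) :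
    Nat.card V ≤ Nat.card E + 1 := by
  refine h.card_vert_le_card_edgeSet_add_one.trans (Nat.add_le_add_right ?_ 1)
  have hlift : ∀ z : (fromRel fun x y => ∃ e, ends e = s(x, y)).edgeSet, ∃ e, ends e = z := by
    rintro ⟨z, hz⟩
    induction z with
    | _ x y =>
      obtain ⟨-, hxy | ⟨e, he⟩⟩ := (fromRel_adj _ x y).mp ((mem_edgeSet _).mp hz)
      · exact hxy
      · exact ⟨e, he.trans Sym2.eq_swap⟩
  choose lift hlift using hlift
  exact Nat.card_le_card_of_injective lift fun z₁ z₂ h =>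
    Subtype.ext ((hlift z₁).symm.trans (h ▸ hlift z₂))

theorem connected_fromRel_of_surjective (ends : E → Sym2 V) (ends' : E' → Sym2 W)
    (h : (fromRel fun x y => ∃ e, ends e = s(x, y)).Connected) {f : V → W}
    (hf : Function.Surjective f) (hmap : ∀ e, ∃ e', ends' e' = (ends e).map f) :
    (fromRel fun a b => ∃ e', ends' e' = s(a, b)).Connected := by
  have : Nonempty W := h.nonempty.map f
  refine connected_iff _ |>.mpr ⟨fun a b => ?_, this⟩
  obtain ⟨x, rfl⟩ := hf a
  obtain ⟨y, rfl⟩ := hf b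
  rw [reachable_iff_reflTransGen]
  refine ((reachable_iff_reflTransGen x y).mp (h.preconnected x y)).lift' f fun u v huv => ?_
  change Relation.ReflTransGen _ (f u) (f v)
  by_cases huv' : f u = f v
  · rw [huv']
  refine .single ((fromRel_adj _ _ _).mpr ⟨huv', ?_⟩)
  obtain ⟨-, ⟨e, he⟩ | ⟨e, he⟩⟩ := (fromRel_adj _ _ _).mp huv
  · obtain ⟨e', he'⟩ := hmap e
    exact .inl ⟨e', by rw [he', he, Sym2.map_mk]⟩
  · obtain ⟨e', he'⟩ := hmap e
    exact .inr ⟨e', by rw [he', he, Sym2.map_mk]⟩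

theorem card_orbitRel_quotient_le_add_one {Γ : Type*} [Group Γ] [MulAction Γ V] [MulAction Γ E]
    [Finite E] (ends : E → Sym2 V) (hends : ∀ (γ : Γ) e, ends (γ • e) = (ends e).map (γ • ·))
    (h : (fromRel fun x y => ∃ e, ends e = s(x, y)).Connected) :
    Nat.card (orbitRel.Quotient Γ V) ≤ Nat.card (orbitRel.Quotient Γ E) + 1 := by
  let π : V → orbitRel.Quotient Γ V := Quotient.mk _
  let ends' : orbitRel.Quotient Γ E → Sym2 (orbitRel.Quotient Γ V) :=
    Quotient.lift (fun e => (ends e).map π) <| by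
      rintro _ e ⟨γ, rfl⟩
      rw [hends, Sym2.map_map]
      exact Sym2.map_congr fun x _ => Quotient.sound ⟨γ, rfl⟩
  exact card_le_card_add_one_of_connected ends' <|
    connected_fromRel_of_surjective ends ends' h Quotient.mk_surjective fun e => ⟨⟦e⟧, rfl⟩

end QuotientGraph

theorem Multigraph.forall_of_edge_closed (G : Multigraph) {P : G.V → Prop}
    (hP : ∀ e x y, x ∈ G.ends e → y ∈ G.ends e → P x → P y) {x : G.V} (hx : P x) (y : G.V) :
    P y := by
  induction (SimpleGraph.reachable_iff_reflTransGen x y).mp (G.connected.preconnected x y) with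
  | refl => exact hx
  | tail _ hadj ih =>
    obtain ⟨-, ⟨e, he⟩ | ⟨e, he⟩⟩ := (SimpleGraph.fromRel_adj _ _ _).mp hadj
    · exact hP e _ _ (he ▸ Sym2.mem_mk_left _ _) (he ▸ Sym2.mem_mk_right _ _) ih
    · exact hP e _ _ (he ▸ Sym2.mem_mk_right _ _) (he ▸ Sym2.mem_mk_left _ _) ih

namespace GraphAction

variable {Γ : Type} [Group Γ] {G : Multigraph} (A : GraphAction Γ G)

theorem actV_apply_eq_self_of_mem_ends (hΓ : Odd (Nat.card Γ)) {δ : Γ} {e : G.E}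
    (he : A.actE δ e = e) {x : G.V} (hx : x ∈ G.ends e) : A.actV δ x = x := by
  have hodd : Odd (orderOf (A.actV δ)) :=
    hΓ.of_dvd_nat ((orderOf_map_dvd _ δ).trans (orderOf_dvd_natCard δ))
  exact (A.actV δ).apply_eq_self_of_mem_of_map_eq hodd (by rw [← A.ends_map, he]) hx

theorem not_vertical_of_mem_ends {x : G.V} (hx : ∀ δ, A.actV δ x = x) {e : G.E}
    (hxe : x ∈ G.ends e) : ¬ A.Vertical ⊤ e := by
  rintro ⟨u, v, huv, δ, -, hδ⟩
  have hu : u = x ∧ v = x := by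
    rcases Sym2.mem_iff.mp (huv ▸ hxe) with rfl | rfl
    · exact ⟨rfl, hδ ▸ hx δ⟩
    · exact ⟨(A.actV δ).injective (hδ.trans (hx δ).symm), rfl⟩
  exact G.loopless e (by rw [huv, hu.1, hu.2]; exact Sym2.mk_isDiag_iff.mpr rfl)

theorem card_incident_orbit_of_fixed {e : G.E} (he : ∀ δ, A.actE δ e = e) {x : G.V}
    (hxe : x ∈ G.ends e) : Nat.card {d : G.E // x ∈ G.ends d ∧ A.erel ⊤ d e} = 1 := by
  refine Nat.card_eq_one_iff_exists.mpr ⟨⟨e, hxe, 1, trivial, by simp⟩, ?_⟩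
  rintro ⟨d, -, δ, -, rfl⟩
  refine Subtype.ext ?_
  simpa [map_inv] using he δ⁻¹

theorem one_lt_card_incident_orbit {x : G.V} (hx : ∀ δ, A.actV δ x = x) {e : G.E}
    (hxe : x ∈ G.ends e) {δ : Γ} (hδ : A.actE δ e ≠ e) :
    1 < Nat.card {d : G.E // x ∈ G.ends d ∧ A.erel ⊤ d e} := by
  have hδxe : x ∈ G.ends (A.actE δ e) := by
    rw [A.ends_map]
    exact Sym2.mem_map.mpr ⟨x, hxe, hx δ⟩
  refine Finite.one_lt_card_iff_nontrivial.mpr ⟨⟨e, hxe, 1, trivial, by simp⟩,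
    ⟨A.actE δ e, hδxe, δ⁻¹, trivial, by simp [map_inv]⟩, fun h => hδ ?_⟩
  exact (congrArg Subtype.val h).symm

/-- Harmonicity at a vertex fixed by `Γ`: a fixed edge there has an orbit of one incident edge,
so every incident edge must too. -/
theorem forall_fixed_of_mem_ends (hA : A.QuotHarmonic ⊤) {x : G.V} (hx : ∀ δ, A.actV δ x = x)
    {e e' : G.E} (he : ∀ δ, A.actE δ e = e) (hxe : x ∈ G.ends e) (hxe' : x ∈ G.ends e')
    (δ : Γ) : A.actE δ e' = e' := by
  by_contra hδ
  have hcard := hA x e e' (A.not_vertical_of_mem_ends hx hxe) (A.not_vertical_of_mem_ends hx hxe')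
    ⟨x, hxe, 1, trivial, by simp⟩ ⟨x, hxe', 1, trivial, by simp⟩
  rw [A.card_incident_orbit_of_fixed he hxe] at hcard
  exact (A.one_lt_card_incident_orbit hx hxe' hδ).ne hcard

theorem eq_one_of_forall_fixed_edge (hΓ : Odd (Nat.card Γ)) (hA : A.QuotHarmonic ⊤) {e : G.E}
    (he : ∀ δ, A.actE δ e = e) (γ : Γ) : γ = 1 := by
  let P : G.V → Prop := fun x => ∃ e, x ∈ G.ends e ∧ ∀ δ, A.actE δ e = e
  have hfixV : ∀ x, P x → ∀ δ, A.actV δ x = x := fun x ⟨_, hxd, hd⟩ δ =>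
    A.actV_apply_eq_self_of_mem_ends hΓ (hd δ) hxd
  have hfixE : ∀ x, P x → ∀ e', x ∈ G.ends e' → ∀ δ, A.actE δ e' = e' := fun x hPx e' hxe' =>
    have ⟨_, hxd, hd⟩ := hPx
    A.forall_fixed_of_mem_ends hA (hfixV x hPx) hd hxd hxe'
  have hP : ∀ y, P y := G.forall_of_edge_closed
    (fun e' x y hx hy hPx => ⟨e', hy, hfixE x hPx e' hx⟩) ⟨e, (G.ends e).out_fst_mem, he⟩
  refine A.faithful γ (fun x => hfixV x (hP x) γ) fun f => ?_
  exact hfixE _ (hP _) f (G.ends f).out_fst_mem γ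

end GraphAction

theorem cyclic_cover_unramified_general {C : Type} [Group C] {G : Multigraph}
    (A : GraphAction C G) (hA : A.ActsHarmonically) (g₁ p : ℕ) (hg₁ : 1 < g₁)
    (hp : p.Prime) (hcard : Nat.card C = p)
    (hg : G.genus = ((p * (g₁ - 1) + 1 : ℕ) : ℤ)) (hbig : g₁ + 1 < p) :
    ∀ (x : G.V) (γ : C), A.actV γ x = x → γ = 1 := by
  intro x γ hx
  by_contra hγ
  let _ := MulAction.compHom G.V A.actV
  let _ := MulAction.compHom G.E A.actE
  have hodd : Odd (Nat.card C) := hcard ▸ hp.odd_of_ne_two (by omega)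
  have hfreeE : Nat.card (MulAction.fixedPoints C G.E) = 0 := by
    refine Nat.card_eq_zero.mpr (.inl ⟨fun ⟨_, he⟩ => hγ ?_⟩)
    exact A.eq_one_of_forall_fixed_edge hodd (hA ⊤).1 he γ
  have hfixV : 0 < Nat.card (MulAction.fixedPoints C G.V) := by
    have hx' : x ∈ MulAction.fixedPoints C G.V :=
      MulAction.fixedBy_eq_fixedPoints_of_prime_card (α := G.V) hp hcard hγ ▸ hx
    exact Nat.card_pos_iff.mpr ⟨⟨x, hx'⟩, inferInstance⟩
  have hV := MulAction.card_add_mul_card_fixedPoints_of_prime_card (α := G.V) hp hcard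
  have hE := MulAction.card_add_mul_card_fixedPoints_of_prime_card (α := G.E) hp hcard
  have hq := card_orbitRel_quotient_le_add_one (Γ := C) G.ends A.ends_map G.connected
  rw [Multigraph.genus, ← Nat.card_eq_fintype_card, ← Nat.card_eq_fintype_card] at hg
  rw [hfreeE, mul_zero, add_zero] at hE
  zify [hp.one_le] at hV hE hq hfixV
  push_cast [Nat.cast_sub hg₁.le] at hg
  have hbound := Int.sub_one_le_of_sub_one_mul_eq_mul (p := p)
    (m := g₁ - 1 + Nat.card (MulAction.orbitRel.Quotient C G.V)
      - Nat.card (MulAction.orbitRel.Quotient C G.E))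
    (by exact_mod_cast hp.pos) hfixV (by linear_combination hV - hE + hg)
  omega

/-- Let `g₁ > 1`, `p` prime, and `g − 1 = p(g₁ − 1)`. If a cyclic group
`C` of order `p` acts harmonically on a graph `G` of genus `g` and `p > g₁ + 1`, then the
`p`-cyclic cover `G → G/C` is horizontally unramified: every vertex stabilizer is
trivial. -/
theorem cyclic_cover_unramified {C : Type} [Group C] [IsCyclic C] {G : Multigraph}
    (A : GraphAction C G) (hA : A.ActsHarmonically) (g₁ p : ℕ) (hg₁ : 1 < g₁)
    (hp : p.Prime) (hcard : Nat.card C = p)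
    (hg : G.genus = ((p * (g₁ - 1) + 1 : ℕ) : ℤ)) (hbig : g₁ + 1 < p) :
    ∀ (x : G.V) (γ : C), A.actV γ x = x → γ = 1 :=
  cyclic_cover_unramified_general A hA g₁ p hg₁ hp hcard hg hbig
end
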